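/- arXiv:1804.05350 — 3 statements merged into one kernel-verified Lean document; each statement's English description precedes it below -/
import Mathlib

section
/- Let φ : ℝ⁴ → ℝ be continuously differentiable in the variables (a1, a2, a3, a4), and suppose that for all (a1,a2,a3,a4) ∈ ℝ⁴: a4·∂φ/∂a2 = 0, a4·∂φ/∂a1 − (5a3/6)·∂φ/∂a2 = 0, −(2a4/5)·∂φ/∂a3 + (5a1/6)·∂φ/∂a2 = 0, and −a1·∂φ/∂a1 + (2a3/5)·∂φ/∂a3 − (3a2/5)·∂φ/∂a2 = 0. Then φ depends only on a4, i.e., φ(a1,a2,a3,a4) = φ(0,0,0,a4) for all (a1,a2,a3,a4) ∈ ℝ⁴. -/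
/-! The first equation kills `∂φ/∂a2` on the dense set `a4 ≠ 0`, hence everywhere by continuity of
the derivative. The second and third equations then reduce to `a4·∂φ/∂a1 = 0` and
`a4·∂φ/∂a3 = 0`, so `∂φ/∂a1` and `∂φ/∂a3` vanish identically as well, and `φ` is constant along
every segment on which `a4` is fixed. -/

theorem eq_zero_of_mul_eq_zero_of_dense {X M₀ : Type*} [TopologicalSpace X] [MulZeroClass M₀]
    [NoZeroDivisors M₀] [TopologicalSpace M₀] [T2Space M₀] {c g : X → M₀} (hg : Continuous g)
    (hc : Dense {x | c x ≠ 0}) (h : ∀ x, c x * g x = 0) (x : X) : g x = 0 :=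
  congrFun (hg.ext_on hc continuous_const fun y hy => (mul_eq_zero.mp (h y)).resolve_left hy) x

theorem dense_fourth_ne_zero : Dense {p : ℝ × ℝ × ℝ × ℝ | p.2.2.2 ≠ 0} :=
  (dense_compl_singleton (0 : ℝ)).preimage (isOpenMap_snd.comp (isOpenMap_snd.comp isOpenMap_snd))

theorem apply_add_eq_of_forall_fderiv_apply_eq_zero {E F : Type*} [NormedAddCommGroup E]
    [NormedSpace ℝ E] [NormedAddCommGroup F] [NormedSpace ℝ F] {f : E → F}
    (hf : Differentiable ℝ f) {v : E} (hv : ∀ x, fderiv ℝ f x v = 0) (x : E) :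
    f (x + v) = f x := by
  have hderiv : ∀ t : ℝ, HasDerivAt (fun t : ℝ => f (x + t • v)) 0 t := fun t => by
    simpa [Function.comp_def, hv] using (hf _).hasFDerivAt.comp_hasDerivAt t
      (((hasDerivAt_id' t).smul_const v).const_add x)
  simpa using is_const_of_deriv_eq_zero (fun t => (hderiv t).differentiableAt)
    (fun t => (hderiv t).deriv) 1 0

theorem ContinuousLinearMap.apply_eq_zero_of_apply_axes_eq_zero {F : Type*} [NormedAddCommGroup F]
    [NormedSpace ℝ F] (L : ℝ × ℝ × ℝ × ℝ →L[ℝ] F) (h1 : L (1, 0, 0, 0) = 0)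
    (h2 : L (0, 1, 0, 0) = 0) (h3 : L (0, 0, 1, 0) = 0) (a1 a2 a3 : ℝ) :
    L (a1, a2, a3, 0) = 0 := by
  have hsum : ((a1, a2, a3, 0) : ℝ × ℝ × ℝ × ℝ) =
      a1 • (1, 0, 0, 0) + a2 • (0, 1, 0, 0) + a3 • (0, 0, 1, 0) := by simp
  rw [hsum, map_add, map_add, map_smul, map_smul, map_smul, h1, h2, h3]
  simp

theorem stmt_2_general (φ : ℝ × ℝ × ℝ × ℝ → ℝ) (hφ : ContDiff ℝ 1 φ)
    (h1 : ∀ a1 a2 a3 a4 : ℝ,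
      a4 * fderiv ℝ φ (a1, a2, a3, a4) (0, 1, 0, 0) = 0)
    (h2 : ∀ a1 a2 a3 a4 : ℝ,
      a4 * fderiv ℝ φ (a1, a2, a3, a4) (1, 0, 0, 0)
        - (5 * a3 / 6) * fderiv ℝ φ (a1, a2, a3, a4) (0, 1, 0, 0) = 0)
    (h3 : ∀ a1 a2 a3 a4 : ℝ,
      -(2 * a4 / 5) * fderiv ℝ φ (a1, a2, a3, a4) (0, 0, 1, 0)
        + (5 * a1 / 6) * fderiv ℝ φ (a1, a2, a3, a4) (0, 1, 0, 0) = 0) :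
    ∀ a1 a2 a3 a4 : ℝ, φ (a1, a2, a3, a4) = φ (0, 0, 0, a4) := by
  have hpartial (v : ℝ × ℝ × ℝ × ℝ) : Continuous fun p => fderiv ℝ φ p v :=
    (hφ.continuous_fderiv one_ne_zero).clm_apply continuous_const
  have hd2 := eq_zero_of_mul_eq_zero_of_dense (hpartial (0, 1, 0, 0)) dense_fourth_ne_zero
    fun ⟨a1, a2, a3, a4⟩ => h1 a1 a2 a3 a4
  have hd1 := eq_zero_of_mul_eq_zero_of_dense (hpartial (1, 0, 0, 0)) dense_fourth_ne_zero
    fun ⟨a1, a2, a3, a4⟩ => by simpa [hd2] using h2 a1 a2 a3 a4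
  have hd3 := eq_zero_of_mul_eq_zero_of_dense (hpartial (0, 0, 1, 0)) dense_fourth_ne_zero
    fun ⟨a1, a2, a3, a4⟩ => show a4 * _ = 0 by
      have h := h3 a1 a2 a3 a4
      rw [hd2, mul_zero, add_zero] at h
      linarith
  intro a1 a2 a3 a4
  simpa using apply_add_eq_of_forall_fderiv_apply_eq_zero (hφ.differentiable one_ne_zero)
    (fun p => (fderiv ℝ φ p).apply_eq_zero_of_apply_axes_eq_zero (hd1 p) (hd2 p) (hd3 p) a1 a2 a3)
    (0, 0, 0, a4)

/-- A continuously differentiable function `φ : ℝ⁴ → ℝ` satisfying the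
determining system of first-order linear PDEs
`a4·∂φ/∂a2 = 0`, `a4·∂φ/∂a1 − (5a3/6)·∂φ/∂a2 = 0`,
`−(2a4/5)·∂φ/∂a3 + (5a1/6)·∂φ/∂a2 = 0`,
`−a1·∂φ/∂a1 + (2a3/5)·∂φ/∂a3 − (3a2/5)·∂φ/∂a2 = 0`
depends only on `a4`. -/
theorem stmt_2 (φ : ℝ × ℝ × ℝ × ℝ → ℝ) (hφ : ContDiff ℝ 1 φ)
    (h1 : ∀ a1 a2 a3 a4 : ℝ,
      a4 * fderiv ℝ φ (a1, a2, a3, a4) (0, 1, 0, 0) = 0)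
    (h2 : ∀ a1 a2 a3 a4 : ℝ,
      a4 * fderiv ℝ φ (a1, a2, a3, a4) (1, 0, 0, 0)
        - (5 * a3 / 6) * fderiv ℝ φ (a1, a2, a3, a4) (0, 1, 0, 0) = 0)
    (h3 : ∀ a1 a2 a3 a4 : ℝ,
      -(2 * a4 / 5) * fderiv ℝ φ (a1, a2, a3, a4) (0, 0, 1, 0)
        + (5 * a1 / 6) * fderiv ℝ φ (a1, a2, a3, a4) (0, 1, 0, 0) = 0)
    (h4 : ∀ a1 a2 a3 a4 : ℝ,
      -a1 * fderiv ℝ φ (a1, a2, a3, a4) (1, 0, 0, 0)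
        + (2 * a3 / 5) * fderiv ℝ φ (a1, a2, a3, a4) (0, 0, 1, 0)
        - (3 * a2 / 5) * fderiv ℝ φ (a1, a2, a3, a4) (0, 1, 0, 0) = 0) :
    ∀ a1 a2 a3 a4 : ℝ, φ (a1, a2, a3, a4) = φ (0, 0, 0, a4) :=
  stmt_2_general φ hφ h1 h2 h3
end

section
/- For ε = (ε1, ε2, ε3, ε4) ∈ ℝ⁴ define the map A_ε : ℝ⁴ → ℝ⁴ sending (a1,a2,a3,a4) to (ã1,ã2,ã3,ã4) where ã1 = −a4·ε1·e^{ε4} + a1·e^{ε4}, ã2 = (5a3ε1/6)·e^{3ε4/5} − (3a4ε2/5)·e^{3ε4/5} + a2·e^{3ε4/5} + (5a4ε1ε3/6)·e^{ε4} − (5a1ε3/6)·e^{ε4}, ã3 = (2a4ε3/5) + a3·e^{−2ε4/5}, ã4 = a4. Then for every nonzero a = (a1,a2,a3,a4) ∈ ℝ⁴ there exist ε ∈ ℝ⁴, a nonzero λ ∈ ℝ, and either: λ·A_ε(a) = (1,0,0,0), or λ·A_ε(a) = (0,1,0,0), or λ·A_ε(a) = (0,0,1,0), or λ·A_ε(a)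 = (0,0,0,1), or λ·A_ε(a) = (α, 0, δ, 0) for some α ∈ ℝ and δ ∈ {1,−1}. -/
/-- The full adjoint action `A_ε` of the symmetry group on coefficient vectors
`(a1, a2, a3, a4)` of a general Lie algebra element. -/
noncomputable def adjAct (ε a : ℝ × ℝ × ℝ × ℝ) : ℝ × ℝ × ℝ × ℝ :=
  (-a.2.2.2 * ε.1 * Real.exp ε.2.2.2 + a.1 * Real.exp ε.2.2.2,
   (5 * a.2.2.1 * ε.1 / 6) * Real.exp (3 * ε.2.2.2 / 5)
     - (3 * a.2.2.2 * ε.2.1 / 5) * Real.exp (3 * ε.2.2.2 / 5)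
     + a.2.1 * Real.exp (3 * ε.2.2.2 / 5)
     + (5 * a.2.2.2 * ε.1 * ε.2.2.1 / 6) * Real.exp ε.2.2.2
     - (5 * a.1 * ε.2.2.1 / 6) * Real.exp ε.2.2.2,
   2 * a.2.2.2 * ε.2.2.1 / 5 + a.2.2.1 * Real.exp (-(2 * ε.2.2.2 / 5)),
   a.2.2.2)

/-!
With `ε₄ = 0` the action is a unipotent linear map of `a`: `ε₁` shifts `a₁` by `-a₄ ε₁` and `a₂` by
`5 a₃ ε₁ / 6`, `ε₂` shifts `a₂` by `-3 a₄ ε₂ / 5`, and `ε₃` shifts `a₃` by `2 a₄ ε₃ / 5` and `a₂` by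
`5 ε₃ (a₄ ε₁ - a₁) / 6`. So if `a₄ ≠ 0` these shifts clear `a₁`, `a₃` and `a₂`; otherwise `ε₁` clears
`a₂` when `a₃ ≠ 0`, and `ε₃` clears it when `a₃ = 0 ≠ a₁`. Scaling by the inverse of the surviving
coefficient, or by `|a₃|⁻¹` when both `a₁` and `a₃` survive, gives the representative.
-/

lemma adjAct_of_fourth_eq_zero (e₁ e₂ e₃ : ℝ) (a : ℝ × ℝ × ℝ × ℝ) :
    adjAct (e₁, e₂, e₃, 0) a =
      (a.1 - a.2.2.2 * e₁,
       a.2.1 + 5 * a.2.2.1 * e₁ / 6 - 3 * a.2.2.2 * e₂ / 5 + 5 * e₃ * (a.2.2.2 * e₁ - a.1) / 6,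
       a.2.2.1 + 2 * a.2.2.2 * e₃ / 5,
       a.2.2.2) := by
  simp only [adjAct, mul_zero, zero_div, neg_zero, Real.exp_zero, mul_one, Prod.mk.injEq]
  refine ⟨by ring, by ring, by ring, trivial⟩

lemma adjAct_zero_left (a : ℝ × ℝ × ℝ × ℝ) : adjAct 0 a = a :=
  (adjAct_of_fourth_eq_zero 0 0 0 a).trans (by simp)

lemma exists_adjAct_eq_V4 (a₁ a₂ a₃ a₄ : ℝ) (h₄ : a₄ ≠ 0) :
    ∃ ε, adjAct ε (a₁, a₂, a₃, a₄) = (0, 0, 0, a₄) := by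
  refine ⟨(a₁ / a₄, 5 * (a₂ + 5 * a₃ * (a₁ / a₄) / 6) / (3 * a₄), -(5 * a₃) / (2 * a₄), 0), ?_⟩
  rw [adjAct_of_fourth_eq_zero]
  simp only [Prod.mk.injEq]
  refine ⟨?_, ?_, ?_, trivial⟩ <;> field_simp <;> ring

lemma exists_adjAct_eq_V1_add_V3 (a₁ a₂ a₃ : ℝ) (h₃ : a₃ ≠ 0) :
    ∃ ε, adjAct ε (a₁, a₂, a₃, 0) = (a₁, 0, a₃, 0) := by
  refine ⟨(-(6 * a₂) / (5 * a₃), 0, 0, 0), ?_⟩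
  rw [adjAct_of_fourth_eq_zero]
  simp only [Prod.mk.injEq]
  refine ⟨by ring, ?_, by ring, trivial⟩
  field_simp
  ring

lemma exists_adjAct_eq_V1 (a₁ a₂ : ℝ) (h₁ : a₁ ≠ 0) :
    ∃ ε, adjAct ε (a₁, a₂, 0, 0) = (a₁, 0, 0, 0) := by
  refine ⟨(0, 0, 6 * a₂ / (5 * a₁), 0), ?_⟩
  rw [adjAct_of_fourth_eq_zero]
  simp only [Prod.mk.injEq]
  refine ⟨by ring, ?_, by ring, trivial⟩
  field_simp
  ring

/-- Every nonzero coefficient vector can be mapped, by the adjoint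
action together with a nonzero scaling, to one of the representatives
`(1,0,0,0)`, `(0,1,0,0)`, `(0,0,1,0)`, `(0,0,0,1)`, or `(α,0,±1,0)`,
corresponding to the one-dimensional optimal system `{V1, V2, V3, V4, α·V1 ± V3}`. -/
theorem stmt_3 (a : ℝ × ℝ × ℝ × ℝ) (ha : a ≠ 0) :
    ∃ (ε : ℝ × ℝ × ℝ × ℝ) (lam : ℝ), lam ≠ 0 ∧
      (lam • adjAct ε a = ((1 : ℝ), (0 : ℝ), (0 : ℝ), (0 : ℝ)) ∨
       lam • adjAct ε a = ((0 : ℝ), (1 : ℝ), (0 : ℝ), (0 : ℝ)) ∨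
       lam • adjAct ε a = ((0 : ℝ), (0 : ℝ), (1 : ℝ), (0 : ℝ)) ∨
       lam • adjAct ε a = ((0 : ℝ), (0 : ℝ), (0 : ℝ), (1 : ℝ)) ∨
       ∃ (α δ : ℝ), (δ = 1 ∨ δ = -1) ∧
         lam • adjAct ε a = (α, (0 : ℝ), δ, (0 : ℝ))) := by
  obtain ⟨a₁, a₂, a₃, a₄⟩ := a
  rcases eq_or_ne a₄ 0 with rfl | h₄
  · rcases eq_or_ne a₃ 0 with rfl | h₃
    · rcases eq_or_ne a₁ 0 with rfl | h₁
      · have h₂ : a₂ ≠ 0 := by rintro rfl; exact ha rfl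
        refine ⟨0, a₂⁻¹, inv_ne_zero h₂, Or.inr (Or.inl ?_)⟩
        simp [adjAct_zero_left, h₂]
      · obtain ⟨ε, hε⟩ := exists_adjAct_eq_V1 a₁ a₂ h₁
        exact ⟨ε, a₁⁻¹, inv_ne_zero h₁, Or.inl (by simp [hε, h₁])⟩
    · obtain ⟨ε, hε⟩ := exists_adjAct_eq_V1_add_V3 a₁ a₂ a₃ h₃
      have hsign : a₃ / |a₃| = 1 ∨ a₃ / |a₃| = -1 := by
        rcases abs_choice a₃ with h | h <;> rw [h] <;> simp [h₃]
      refine ⟨ε, |a₃|⁻¹, inv_ne_zero (abs_ne_zero.mpr h₃),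
        Or.inr (Or.inr (Or.inr (Or.inr ⟨a₁ / |a₃|, a₃ / |a₃|, hsign, ?_⟩)))⟩
      simp [hε, div_eq_inv_mul]
  · obtain ⟨ε, hε⟩ := exists_adjAct_eq_V4 a₁ a₂ a₃ a₄ h₄
    exact ⟨ε, a₄⁻¹, inv_ne_zero h₄, Or.inr (Or.inr (Or.inr (Or.inl (by simp [hε, h₄]))))⟩
end

section
/- Let α ∈ ℝ, α ≠ 0, and let (Pₙ), (Qₙ), (Rₙ) be real sequences (with P₀, Q₀, R₀, P₁, P₂ arbitrary) satisfying: (i) Q₁ = (1 − 18α²P₀P₁)/(12α²); (ii) for every n ≥ 1, Q_{n+1} = −(3/(2(n+1)))·Σ_{k=0}^{n}(n−k+1)·Pₖ·P_{n−k+1}; (iii) for every n ≥ 0, R_{n+1} = −(1/(18α²(n+1)))·[9α²·Σ_{k=0}^{n}(n−k+1)·Pₖ·Q_{n−k+1} + 18α²·Σ_{k=0}^{n}(n−k+1)·Qₖ·P_{n−k+1} + 4n·Pₙ + 6Pₙ]; (iv) for n = 0 and for every n ≥ 2, P_{n+3} = −(1/(1296α⁴(n+1)(n+2)(n+3)))·[−450α²·Σ_{k=0}^{n}(n−k+1)·Pₖ·R_{n−k+1}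 − 900α²·Σ_{k=0}^{n}(n−k+1)·Rₖ·P_{n−k+1} + 50·Σ_{k=0}^{n}Pₖ·P_{n−k} + 150·Σ_{k=0}^{n}(n−k)·Pₖ·P_{n−k} − 125Qₙ]; and (v) P₄ = [4050α⁴P₀³P₂ + 2025α⁴P₀²P₁² − 4050α⁴P₀P₁Q₁ − 5400α⁴P₀P₂Q₀ + 8100α⁴P₁R₁ + 10800α⁴P₂R₀ − 3000α²P₀P₁ + 750α²Q₁ + 250]/(186624α⁶). Then the formal power series F = Σₙ Pₙξⁿ, G = Σₙ Qₙξⁿ, H = Σₙ Rₙξⁿ in ℝ[[ξ]] satisfy the formal power series identities: 18α²·F·F′ + 12α²·G′ − 1 = 0; 9α³·F·G′ + 18α³·G·F′ + 18α³·H′ + 4α·ξ·F′ + 6α·F = 0; and 3888α⁶·F′′′ − 1350α⁴·F·H′ − 2700α⁴·H·F′ + 450α²·ξ·F·F′ + 150α²·F² − 375α²·G − 125ξ = 0. -/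
/-!
Each identity is checked coefficientwise. The `ξⁿ`-coefficient of `F·G′` is the Cauchy sum
`Σₖ (n−k+1) Pₖ Q_{n−k+1}` and that of `ξ·F·F′` is `Σₖ (n−k) Pₖ P_{n−k}`, so the `ξⁿ`-coefficient of
each equation is one of the recurrences (ii)–(iv) solved for its highest-index term `(n+1) Q_{n+1}`,
`(n+1) R_{n+1}` or `(n+1)(n+2)(n+3) P_{n+3}`. The inhomogeneous terms `−1` and `−125ξ` only affect
the `ξ⁰`-coefficient of the first equation and the `ξ¹`-coefficient of the third; there (i) and (v)
take over, (v) being (iv) at `n = 1` with the extra `125` and with `Q₂, R₁, R₂` eliminated through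
(ii) and (iii).
-/

open PowerSeries
open Finset (range sum_congr mem_range_succ_iff)

section Coefficients

variable {R : Type*} [CommRing R]

theorem coeff_mk_mul_mk (f g : ℕ → R) (n : ℕ) :
    coeff n (mk f * mk g) = ∑ k ∈ range (n + 1), f k * g (n - k) := by
  rw [coeff_mul, Finset.Nat.sum_antidiagonal_eq_sum_range_succ_mk]
  simp only [coeff_mk]

theorem coeff_mk_mul_derivative_mk (f g : ℕ → R) (n : ℕ) :
    coeff n (mk f * derivative R (mk g)) =
      ∑ k ∈ range (n + 1), ((n : R) - k + 1) * f k * g (n - k + 1) := by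
  rw [coeff_mul, Finset.Nat.sum_antidiagonal_eq_sum_range_succ_mk]
  refine sum_congr rfl fun k hk => ?_
  rw [coeff_mk, coeff_derivative, coeff_mk, Nat.cast_sub (mem_range_succ_iff.mp hk)]
  ring

theorem coeff_X_mul_derivative (f : R⟦X⟧) (n : ℕ) :
    coeff n (X * derivative R f) = n * coeff n f := by
  rcases n with _ | n
  · simp
  · rw [coeff_succ_X_mul, coeff_derivative, mul_comm]
    push_cast
    rfl

theorem coeff_X_mul_mk_mul_derivative_mk (f g : ℕ → R) (n : ℕ) :
    coeff n (X * (mk f * derivative R (mk g))) =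
      ∑ k ∈ range (n + 1), ((n : R) - k) * f k * g (n - k) := by
  have hXg : X * derivative R (mk g) = mk fun m => m * g m := by
    ext m
    rw [coeff_X_mul_derivative, coeff_mk, coeff_mk]
  rw [mul_left_comm, hXg, coeff_mk_mul_mk]
  refine sum_congr rfl fun k hk => ?_
  rw [Nat.cast_sub (mem_range_succ_iff.mp hk)]
  ring

theorem coeff_derivative_derivative_derivative (f : R⟦X⟧) (n : ℕ) :
    coeff n (derivative R (derivative R (derivative R f))) =
      (n + 1) * (n + 2) * (n + 3) * coeff (n + 3) f := by
  simp only [coeff_derivative]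
  push_cast
  ring

end Coefficients

namespace KaupBoussinesq

variable (α : ℝ) (P Q R : ℕ → ℝ) (n : ℕ)

theorem coeff_first_equation :
    coeff n (C (18 * α^2) * mk P * derivative ℝ (mk P)
      + C (12 * α^2) * derivative ℝ (mk Q) - 1) =
      18 * α^2 * ∑ k ∈ range (n + 1), ((n : ℝ) - k + 1) * P k * P (n - k + 1)
        + 12 * α^2 * (n + 1) * Q (n + 1) - if n = 0 then 1 else 0 := by
  rw [mul_assoc, map_sub, map_add, coeff_C_mul, coeff_C_mul, coeff_mk_mul_derivative_mk,
    coeff_derivative, coeff_mk, coeff_one]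
  ring

theorem coeff_second_equation :
    coeff n (C (9 * α^3) * mk P * derivative ℝ (mk Q)
      + C (18 * α^3) * mk Q * derivative ℝ (mk P)
      + C (18 * α^3) * derivative ℝ (mk R)
      + C (4 * α) * X * derivative ℝ (mk P)
      + C (6 * α) * mk P) =
      9 * α^3 * ∑ k ∈ range (n + 1), ((n : ℝ) - k + 1) * P k * Q (n - k + 1)
        + 18 * α^3 * ∑ k ∈ range (n + 1), ((n : ℝ) - k + 1) * Q k * P (n - k + 1)
        + 18 * α^3 * (n + 1) * R (n + 1) + 4 * α * n * P n + 6 * α * P n := by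
  simp only [mul_assoc, map_add, coeff_C_mul, coeff_mk_mul_derivative_mk, coeff_derivative,
    coeff_X_mul_derivative, coeff_mk]
  ring

theorem coeff_third_equation :
    coeff n (C (3888 * α^6) * derivative ℝ (derivative ℝ (derivative ℝ (mk P)))
      - C (1350 * α^4) * mk P * derivative ℝ (mk R)
      - C (2700 * α^4) * mk R * derivative ℝ (mk P)
      + C (450 * α^2) * X * mk P * derivative ℝ (mk P)
      + C (150 * α^2) * (mk P)^2
      - C (375 * α^2) * mk Q - 125 * X) =
      3888 * α^6 * (n + 1) * (n + 2) * (n + 3) * P (n + 3)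
        - 1350 * α^4 * ∑ k ∈ range (n + 1), ((n : ℝ) - k + 1) * P k * R (n - k + 1)
        - 2700 * α^4 * ∑ k ∈ range (n + 1), ((n : ℝ) - k + 1) * R k * P (n - k + 1)
        + 450 * α^2 * ∑ k ∈ range (n + 1), ((n : ℝ) - k) * P k * P (n - k)
        + 150 * α^2 * ∑ k ∈ range (n + 1), P k * P (n - k)
        - 375 * α^2 * Q n - if n = 1 then 125 else 0 := by
  rw [← map_ofNat C 125]
  simp only [mul_assoc, sq (mk P), map_add, map_sub, coeff_C_mul, coeff_mk_mul_derivative_mk,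
    coeff_X_mul_mk_mul_derivative_mk, coeff_derivative_derivative_derivative, coeff_mk_mul_mk,
    coeff_mk, coeff_X, mul_ite, mul_one, mul_zero]

end KaupBoussinesq

/-- For `α ≠ 0`, sequences `(Pₙ), (Qₙ), (Rₙ)` satisfying the stated
recurrence relations give formal power series `F = Σ Pₙξⁿ`, `G = Σ Qₙξⁿ`,
`H = Σ Rₙξⁿ` solving the reduced system
`18α²FF′ + 12α²G′ − 1 = 0`,
`9α³FG′ + 18α³GF′ + 18α³H′ + 4αξF′ + 6αF = 0`,
`3888α⁶F′′′ − 1350α⁴FH′ − 2700α⁴HF′ + 450α²ξFF′ + 150α²F² − 375α²G − 125ξ = 0`. -/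
theorem stmt_5 (α : ℝ) (hα : α ≠ 0) (P Q R : ℕ → ℝ)
    (hQ1 : Q 1 = (1 - 18 * α^2 * P 0 * P 1) / (12 * α^2))
    (hQ : ∀ n : ℕ, 1 ≤ n → Q (n + 1) =
      -(3 / (2 * ((n : ℝ) + 1))) *
        ∑ k ∈ Finset.range (n + 1), ((n : ℝ) - (k : ℝ) + 1) * P k * P (n - k + 1))
    (hR : ∀ n : ℕ, R (n + 1) =
      -(1 / (18 * α^2 * ((n : ℝ) + 1))) *
        (9 * α^2 * ∑ k ∈ Finset.range (n + 1),
            ((n : ℝ) - (k : ℝ) + 1) * P k * Q (n - k + 1)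
          + 18 * α^2 * ∑ k ∈ Finset.range (n + 1),
            ((n : ℝ) - (k : ℝ) + 1) * Q k * P (n - k + 1)
          + 4 * (n : ℝ) * P n + 6 * P n))
    (hP : ∀ n : ℕ, n = 0 ∨ 2 ≤ n → P (n + 3) =
      -(1 / (1296 * α^4 * ((n : ℝ) + 1) * ((n : ℝ) + 2) * ((n : ℝ) + 3))) *
        (-450 * α^2 * ∑ k ∈ Finset.range (n + 1),
            ((n : ℝ) - (k : ℝ) + 1) * P k * R (n - k + 1)
          - 900 * α^2 * ∑ k ∈ Finset.range (n + 1),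
            ((n : ℝ) - (k : ℝ) + 1) * R k * P (n - k + 1)
          + 50 * ∑ k ∈ Finset.range (n + 1), P k * P (n - k)
          + 150 * ∑ k ∈ Finset.range (n + 1), ((n : ℝ) - (k : ℝ)) * P k * P (n - k)
          - 125 * Q n))
    (hP4 : P 4 =
      (4050 * α^4 * (P 0)^3 * P 2 + 2025 * α^4 * (P 0)^2 * (P 1)^2
        - 4050 * α^4 * P 0 * P 1 * Q 1 - 5400 * α^4 * P 0 * P 2 * Q 0
        + 8100 * α^4 * P 1 * R 1 + 10800 * α^4 * P 2 * R 0
        - 3000 * α^2 * P 0 * P 1 + 750 * α^2 * Q 1 + 250) / (186624 * α^6)) :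
    (C (18 * α^2) * mk P * derivative ℝ (mk P)
      + C (12 * α^2) * derivative ℝ (mk Q) - 1 = (0 : ℝ⟦X⟧)) ∧
    (C (9 * α^3) * mk P * derivative ℝ (mk Q)
      + C (18 * α^3) * mk Q * derivative ℝ (mk P)
      + C (18 * α^3) * derivative ℝ (mk R)
      + C (4 * α) * X * derivative ℝ (mk P)
      + C (6 * α) * mk P = (0 : ℝ⟦X⟧)) ∧
    (C (3888 * α^6) * derivative ℝ (derivative ℝ (derivative ℝ (mk P)))
      - C (1350 * α^4) * mk P * derivative ℝ (mk R)
      - C (2700 * α^4) * mk R * derivative ℝ (mk P)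
      + C (450 * α^2) * X * mk P * derivative ℝ (mk P)
      + C (150 * α^2) * (mk P)^2
      - C (375 * α^2) * mk Q - 125 * X = (0 : ℝ⟦X⟧)) := by
  refine ⟨?_, ?_, ?_⟩ <;> ext n
  · rw [KaupBoussinesq.coeff_first_equation, map_zero]
    rcases n with _ | n
    · simp only [zero_add, Finset.sum_range_one, Nat.cast_zero, Nat.sub_self, hQ1, if_pos]
      field_simp
      ring
    · rw [hQ (n + 1) n.succ_pos]
      field_simp
      push_cast
      ring
  · rw [KaupBoussinesq.coeff_second_equation, map_zero, hR n]
    field_simp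
    ring
  · rw [KaupBoussinesq.coeff_third_equation, map_zero]
    obtain rfl | hn := eq_or_ne n 1
    · simp only [Finset.sum_range_succ, Finset.sum_range_zero, hP4, hQ1, hR 0, hR 1, hQ 1 le_rfl,
        Nat.cast_zero, Nat.cast_one, Nat.reduceAdd, Nat.reduceSub, if_pos]
      field_simp
      ring
    · rw [hP n (by omega), if_neg hn]
      field_simp
      ring
end
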